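/- Let X and Y be complex Banach spaces and H a subspace of A(B_X : Y) (where A denotes either A_u or A_b). Then the set ρ̃H of strong norm-attainment points of elements of H is contained in the set ρA(B_X : Y) of strong peak points, which is contained in the set of complex extreme points of B_X. -/

import Mathlib

open Metric Filter Topology Set

/-- The sup norm of a function over the closed unit ball. -/
noncomputable def supNorm {X Y : Type*} [NormedAddCommGroup X] [NormedAddCommGroup Y]
    (f : X → Y) : ℝ :=
  sSup ((fun x => ‖f x‖) '' Metric.closedBall (0 : X) 1)

/-- `f` strongly attains its (sup) norm at `x₀`: every maximizing sequence in the closed unit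
ball has a subsequence converging to a unimodular multiple of `x₀`. -/
def StronglyAttains (𝕂 : Type*) [RCLike 𝕂] {X Y : Type*} [NormedAddCommGroup X]
    [NormedSpace 𝕂 X] [NormedAddCommGroup Y] (f : X → Y) (x₀ : X) : Prop :=
  ∀ xs : ℕ → X, (∀ n, xs n ∈ Metric.closedBall (0 : X) 1) →
    Tendsto (fun n => ‖f (xs n)‖) atTop (nhds (supNorm f)) →
    ∃ (α : 𝕂) (φ : ℕ → ℕ), StrictMono φ ∧ ‖α‖ = 1 ∧
      Tendsto (fun n => xs (φ n)) atTop (nhds (α • x₀))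

/-- The `k`-homogeneous polynomial associated to a continuous `k`-multilinear map. -/
noncomputable def polyEval {𝕂 : Type*} [RCLike 𝕂] {X Y : Type*} [NormedAddCommGroup X]
    [NormedSpace 𝕂 X] [NormedAddCommGroup Y] [NormedSpace 𝕂 Y] {k : ℕ}
    (L : ContinuousMultilinearMap 𝕂 (fun _ : Fin k => X) Y) : X → Y :=
  fun x => L (fun _ => x)

/-- The set `ρ̃𝒫(ᵏX)` of points of the closed unit ball at which some nonzero bounded
`k`-homogeneous scalar polynomial strongly attains its norm. -/
def polyAttainPts (𝕂 : Type*) [RCLike 𝕂] (X : Type*) [NormedAddCommGroup X]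
    [NormedSpace 𝕂 X] (k : ℕ) : Set X :=
  {x₀ | x₀ ∈ Metric.closedBall (0 : X) 1 ∧
    ∃ L : ContinuousMultilinearMap 𝕂 (fun _ : Fin k => X) 𝕂,
      polyEval L ≠ 0 ∧ StronglyAttains 𝕂 (polyEval L) x₀}

/-- Numerical radius `v(f) = sup { |x*(f x)| : (x, x*) ∈ Π(X) }`. -/
noncomputable def numRadius (𝕂 : Type*) [RCLike 𝕂] {X : Type*} [NormedAddCommGroup X]
    [NormedSpace 𝕂 X] (f : X → X) : ℝ :=
  sSup {r | ∃ (x : X) (x' : X →L[𝕂] 𝕂), ‖x‖ = 1 ∧ ‖x'‖ = 1 ∧ x' x = 1 ∧ r = ‖x' (f x)‖}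

/-- The `k`-polynomial numerical index `n^(k)(X)`. -/
noncomputable def polyNumIndex (𝕂 : Type*) [RCLike 𝕂] (X : Type*) [NormedAddCommGroup X]
    [NormedSpace 𝕂 X] (k : ℕ) : ℝ :=
  sInf {r | ∃ L : ContinuousMultilinearMap 𝕂 (fun _ : Fin k => X) X,
    supNorm (polyEval L) = 1 ∧ r = numRadius 𝕂 (polyEval L)}

/-- The numerical index `n(X)` of a Banach space. -/
noncomputable def numIndex (𝕂 : Type*) [RCLike 𝕂] (X : Type*) [NormedAddCommGroup X]
    [NormedSpace 𝕂 X] : ℝ :=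
  sInf {r | ∃ T : X →L[𝕂] X, ‖T‖ = 1 ∧ r = numRadius 𝕂 (⇑T)}

/-- `x` is an extreme point of the convex set `s` : `y + z = 2x` with `y, z ∈ s` forces
`y = z = x`. -/
def IsExtremePt {E : Type*} [AddCommGroup E] (s : Set E) (x : E) : Prop :=
  x ∈ s ∧ ∀ y ∈ s, ∀ z ∈ s, y + z = x + x → y = x ∧ z = x

/-- `x` is a strongly exposed point of the closed unit ball. -/
def StronglyExposedPt (𝕂 : Type*) [RCLike 𝕂] {X : Type*} [NormedAddCommGroup X]
    [NormedSpace 𝕂 X] (x : X) : Prop :=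
  x ∈ Metric.closedBall (0 : X) 1 ∧ ∃ x' : X →L[𝕂] 𝕂, x' ≠ 0 ∧ ‖x'‖ ≤ 1 ∧
    (∀ y ∈ Metric.closedBall (0 : X) 1, RCLike.re (x' y) ≤ RCLike.re (x' x)) ∧
    ∀ xs : ℕ → X, (∀ n, xs n ∈ Metric.closedBall (0 : X) 1) →
      Tendsto (fun n => RCLike.re (x' (xs n))) atTop (nhds (RCLike.re (x' x))) →
      Tendsto xs atTop (nhds x)

/-- `x'` is a weak-* exposed point of the dual unit ball. -/
def WeakStarExposed (𝕂 : Type*) [RCLike 𝕂] {X : Type*} [NormedAddCommGroup X]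
    [NormedSpace 𝕂 X] (x' : X →L[𝕂] 𝕂) : Prop :=
  ‖x'‖ ≤ 1 ∧ ∃ x ∈ Metric.closedBall (0 : X) 1, x' x = 1 ∧
    ∀ y' : X →L[𝕂] 𝕂, ‖y'‖ ≤ 1 → y' x = 1 → y' = x'

/-- `f` is a strong peak function at `x₀`: `f` is nonzero on the ball and every maximizing
sequence in the closed unit ball converges to `x₀`. -/
def StrongPeakAt {X Y : Type*} [NormedAddCommGroup X] [NormedAddCommGroup Y]
    (f : X → Y) (x₀ : X) : Prop :=
  (∃ x ∈ Metric.closedBall (0 : X) 1, f x ≠ 0) ∧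
    ∀ xs : ℕ → X, (∀ n, xs n ∈ Metric.closedBall (0 : X) 1) →
      Tendsto (fun n => ‖f (xs n)‖) atTop (nhds (supNorm f)) →
      Tendsto xs atTop (nhds x₀)

/-- Complex extreme point of the closed unit ball. -/
def ComplexExtremePoint {X : Type*} [NormedAddCommGroup X] [NormedSpace ℂ X] (x : X) : Prop :=
  x ∈ Metric.closedBall (0 : X) 1 ∧
    ∀ y : X, (∀ θ : ℝ, ‖x + Complex.exp (θ * Complex.I) • y‖ ≤ 1) → y = 0

/-- Membership in `A_b(B_X : Y)`: bounded, continuous on the closed unit ball and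
holomorphic on the open unit ball. -/
def MemAb {X Y : Type*} [NormedAddCommGroup X] [NormedSpace ℂ X] [NormedAddCommGroup Y]
    [NormedSpace ℂ Y] (f : X → Y) : Prop :=
  ContinuousOn f (Metric.closedBall (0 : X) 1) ∧
    (∃ C, ∀ x ∈ Metric.closedBall (0 : X) 1, ‖f x‖ ≤ C) ∧
    DifferentiableOn ℂ f (Metric.ball (0 : X) 1)

/-- Membership in `A_u(B_X : Y)`: additionally uniformly continuous on the closed ball. -/
def MemAu {X Y : Type*} [NormedAddCommGroup X] [NormedSpace ℂ X] [NormedAddCommGroup Y]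
    [NormedSpace ℂ Y] (f : X → Y) : Prop :=
  MemAb f ∧ UniformContinuousOn f (Metric.closedBall (0 : X) 1)

/-- The set `ρA_u(B_X)` of strong peak points of `A_u(B_X)`. -/
def strongPeakPtsAu (X : Type*) [NormedAddCommGroup X] [NormedSpace ℂ X] : Set X :=
  {x₀ | ∃ f : X → ℂ, MemAu f ∧ StrongPeakAt f x₀}

/-- The holomorphic numerical index `n_u(X)`. -/
noncomputable def holNumIndex (X : Type*) [NormedAddCommGroup X] [NormedSpace ℂ X] : ℝ :=
  sInf {r | ∃ f : X → X, MemAu f ∧ supNorm f = 1 ∧ r = numRadius ℂ f}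

/-!
If `f` strongly attains its norm at `x₀`, then `‖f (α • x₀)‖ = ‖f‖` for some `|α| = 1`. When
`‖x₀‖ < 1` the maximum modulus principle makes `0` a maximizer as well, which forces `x₀ = 0`, and
`f` itself peaks there. When `‖x₀‖ = 1`, replace `f` by `x ↦ f (α • x)` and add
`g x = ½ (1 + x* x) • y₀`, where `x*` is a norming functional of `x₀` and `y₀ = f x₀ / ‖f‖`.
Maximizing sequences of `f + g` maximize `f`, so they cluster at some `δ • x₀`, and there
`‖f + g‖ = ‖f‖ + 1` forces `|1 + δ| = 2`, i.e. `δ = 1`.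

A strong peak point `x₀` of a holomorphic `f` is a complex extreme point: if `x₀ + λ • y` lies in
the ball for `|λ| = 1`, it does for `|λ| ≤ 1`, and the maximum modulus principle on the discs
`λ ↦ f (r • (x₀ + λ • y))`, `r ↑ 1`, gives some `|λ| = 1` with `‖f (x₀ + λ • y)‖ = ‖f‖`. The
peak property then yields `x₀ + λ • y = x₀`, so `y = 0`.
-/

theorem ContinuousOn.tendsto_comp_of_mem {α β γ : Type*} [TopologicalSpace β]
    [TopologicalSpace γ] {f : β → γ} {s : Set β} {l : Filter α} {u : α → β} {z : β}
    (hf : ContinuousOn f s) (hz : z ∈ s) (hu : ∀ n, u n ∈ s) (hlim : Tendsto u l (𝓝 z)) :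
    Tendsto (fun n => f (u n)) l (𝓝 (f z)) :=
  (hf z hz).tendsto.comp (tendsto_nhdsWithin_iff.2 ⟨hlim, .of_forall hu⟩)

section SupNorm

variable {X Y : Type*} [NormedAddCommGroup X] [NormedAddCommGroup Y] {f : X → Y}

theorem norm_le_supNorm (hbdd : ∃ C, ∀ x ∈ closedBall (0 : X) 1, ‖f x‖ ≤ C) {z : X}
    (hz : z ∈ closedBall (0 : X) 1) : ‖f z‖ ≤ supNorm f := by
  obtain ⟨C, hC⟩ := hbdd
  exact le_csSup ⟨C, by rintro _ ⟨x, hx, rfl⟩; exact hC x hx⟩ ⟨z, hz, rfl⟩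

theorem supNorm_eq_of_forall_norm_le {c : ℝ} (hle : ∀ x ∈ closedBall (0 : X) 1, ‖f x‖ ≤ c)
    {z : X} (hz : z ∈ closedBall (0 : X) 1) (hfz : ‖f z‖ = c) : supNorm f = c :=
  le_antisymm (csSup_le ⟨_, z, hz, rfl⟩ (by rintro _ ⟨x, hx, rfl⟩; exact hle x hx))
    (hfz ▸ norm_le_supNorm ⟨c, hle⟩ hz)

theorem exists_tendsto_supNorm (hbdd : ∃ C, ∀ x ∈ closedBall (0 : X) 1, ‖f x‖ ≤ C) :
    ∃ xs : ℕ → X, (∀ n, xs n ∈ closedBall (0 : X) 1) ∧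
      Tendsto (fun n => ‖f (xs n)‖) atTop (𝓝 (supNorm f)) := by
  have hne : ((fun x => ‖f x‖) '' closedBall (0 : X) 1).Nonempty :=
    ⟨_, 0, mem_closedBall_self zero_le_one, rfl⟩
  have happrox : ∀ n : ℕ, ∃ x ∈ closedBall (0 : X) 1, supNorm f - 1 / (n + 1) < ‖f x‖ := by
    intro n
    obtain ⟨_, ⟨x, hx, rfl⟩, hlt⟩ :=
      exists_lt_of_lt_csSup hne (sub_lt_self (supNorm f) Nat.one_div_pos_of_nat)
    exact ⟨x, hx, hlt⟩
  choose xs hxs hlt using happrox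
  refine ⟨xs, hxs, tendsto_of_tendsto_of_tendsto_of_le_of_le ?_ tendsto_const_nhds
    (fun n => (hlt n).le) (fun n => norm_le_supNorm hbdd (hxs n))⟩
  simpa using tendsto_const_nhds.sub (tendsto_one_div_add_atTop_nhds_zero_nat (𝕜 := ℝ))

theorem norm_eq_supNorm_of_tendsto (hcont : ContinuousOn f (closedBall (0 : X) 1))
    {xs : ℕ → X} (hxs : ∀ n, xs n ∈ closedBall (0 : X) 1)
    (hmax : Tendsto (fun n => ‖f (xs n)‖) atTop (𝓝 (supNorm f))) {z : X}
    (hlim : Tendsto xs atTop (𝓝 z)) : z ∈ closedBall (0 : X) 1 ∧ ‖f z‖ = supNorm f := by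
  have hz : z ∈ closedBall (0 : X) 1 := isClosed_closedBall.mem_of_tendsto hlim (.of_forall hxs)
  exact ⟨hz, tendsto_nhds_unique (hcont.tendsto_comp_of_mem hz hxs hlim).norm hmax⟩

theorem StrongPeakAt.norm_eq_supNorm {x₀ : X} (hp : StrongPeakAt f x₀)
    (hcont : ContinuousOn f (closedBall (0 : X) 1))
    (hbdd : ∃ C, ∀ x ∈ closedBall (0 : X) 1, ‖f x‖ ≤ C) :
    x₀ ∈ closedBall (0 : X) 1 ∧ ‖f x₀‖ = supNorm f := by
  obtain ⟨xs, hxs, hmax⟩ := exists_tendsto_supNorm hbdd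
  exact norm_eq_supNorm_of_tendsto hcont hxs hmax (hp.2 xs hxs hmax)

theorem StrongPeakAt.eq_of_norm_eq_supNorm {x₀ z : X} (hp : StrongPeakAt f x₀)
    (hz : z ∈ closedBall (0 : X) 1) (hfz : ‖f z‖ = supNorm f) : z = x₀ :=
  tendsto_nhds_unique tendsto_const_nhds (hp.2 (fun _ => z) (fun _ => hz) (by simp [hfz]))

end SupNorm

section Rotation

variable {𝕂 X Y : Type*} [RCLike 𝕂] [NormedAddCommGroup X] [NormedSpace 𝕂 X]
  [NormedAddCommGroup Y] {f : X → Y}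

theorem smul_mem_closedBall_iff {α : 𝕂} (hα : ‖α‖ = 1) {x : X} :
    α • x ∈ closedBall (0 : X) 1 ↔ x ∈ closedBall (0 : X) 1 := by
  simp [norm_smul, hα]

theorem supNorm_comp_smul {α : 𝕂} (hα : ‖α‖ = 1) : supNorm (fun x => f (α • x)) = supNorm f := by
  have hball : (α • ·) '' closedBall (0 : X) 1 = closedBall (0 : X) 1 := by
    rw [image_smul, smul_closedBall' (norm_ne_zero_iff.1 (hα.trans_ne one_ne_zero)), smul_zero,
      hα, one_mul]
  simp only [supNorm]
  rw [← image_image (fun x => ‖f x‖) (α • ·), hball]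

end Rotation

namespace StronglyAttains

variable {𝕂 X Y : Type*} [RCLike 𝕂] [NormedAddCommGroup X] [NormedSpace 𝕂 X]
  [NormedAddCommGroup Y] {f : X → Y} {x₀ : X}

theorem exists_smul_eq_of_norm_eq_supNorm (hf : StronglyAttains 𝕂 f x₀) {z : X}
    (hz : z ∈ closedBall (0 : X) 1) (hfz : ‖f z‖ = supNorm f) :
    ∃ γ : 𝕂, ‖γ‖ = 1 ∧ z = γ • x₀ := by
  obtain ⟨γ, -, -, hγ, hlim⟩ := hf (fun _ => z) (fun _ => hz) (by simp [hfz])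
  exact ⟨γ, hγ, tendsto_nhds_unique tendsto_const_nhds hlim⟩

theorem exists_norm_eq_supNorm (hf : StronglyAttains 𝕂 f x₀)
    (hcont : ContinuousOn f (closedBall (0 : X) 1))
    (hbdd : ∃ C, ∀ x ∈ closedBall (0 : X) 1, ‖f x‖ ≤ C) :
    ∃ α : 𝕂, ‖α‖ = 1 ∧ α • x₀ ∈ closedBall (0 : X) 1 ∧ ‖f (α • x₀)‖ = supNorm f := by
  obtain ⟨xs, hxs, hmax⟩ := exists_tendsto_supNorm hbdd
  obtain ⟨α, φ, hφ, hα, hlim⟩ := hf xs hxs hmax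
  exact ⟨α, hα, norm_eq_supNorm_of_tendsto hcont (fun n => hxs (φ n))
    (hmax.comp hφ.tendsto_atTop) hlim⟩

theorem strongPeakAt (hf : StronglyAttains 𝕂 f x₀)
    (hcont : ContinuousOn f (closedBall (0 : X) 1))
    (hne : ∃ x ∈ closedBall (0 : X) 1, f x ≠ 0)
    (hunique : ∀ δ : 𝕂, ‖δ‖ = 1 → ‖f (δ • x₀)‖ = supNorm f → δ • x₀ = x₀) :
    StrongPeakAt f x₀ := by
  refine ⟨hne, fun xs hxs hmax => tendsto_of_subseq_tendsto fun ns hns => ?_⟩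
  obtain ⟨δ, φ, hφ, hδ, hlim⟩ := hf (xs ∘ ns) (fun n => hxs (ns n)) (hmax.comp hns)
  obtain ⟨-, hfδ⟩ := norm_eq_supNorm_of_tendsto hcont (fun n => hxs (ns (φ n)))
    ((hmax.comp hns).comp hφ.tendsto_atTop) hlim
  exact ⟨φ, hunique δ hδ hfδ ▸ hlim⟩

theorem add {g : X → Y} {c : ℝ} (hf : StronglyAttains 𝕂 f x₀)
    (hbdd : ∃ C, ∀ x ∈ closedBall (0 : X) 1, ‖f x‖ ≤ C)
    (hg : ∀ x ∈ closedBall (0 : X) 1, ‖g x‖ ≤ c) (hsup : supNorm (f + g) = supNorm f + c) :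
    StronglyAttains 𝕂 (f + g) x₀ := by
  intro xs hxs hmax
  refine hf xs hxs (tendsto_of_tendsto_of_tendsto_of_le_of_le (g := fun n => ‖(f + g) (xs n)‖ - c)
    ?_ tendsto_const_nhds (fun n => ?_) (fun n => norm_le_supNorm hbdd (hxs n)))
  · simpa [hsup] using hmax.sub_const c
  · simp only [Pi.add_apply]
    linarith [norm_add_le (f (xs n)) (g (xs n)), hg _ (hxs n)]

theorem comp_smul (hf : StronglyAttains 𝕂 f x₀) {α : 𝕂} (hα : ‖α‖ = 1) :
    StronglyAttains 𝕂 (fun x => f (α • x)) x₀ := by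
  intro xs hxs hmax
  rw [supNorm_comp_smul hα] at hmax
  obtain ⟨γ, φ, hφ, hγ, hlim⟩ :=
    hf (fun n => α • xs n) (fun n => (smul_mem_closedBall_iff hα).2 (hxs n)) hmax
  have hα0 : α ≠ 0 := norm_ne_zero_iff.1 (hα.trans_ne one_ne_zero)
  refine ⟨α⁻¹ * γ, φ, hφ, by simp [hα, hγ], ?_⟩
  simpa [smul_smul, inv_mul_cancel₀ hα0] using hlim.const_smul α⁻¹

end StronglyAttains

theorem Complex.eq_one_of_norm_one_add {δ : ℂ} (hδ : ‖δ‖ = 1) (h : 2 ≤ ‖1 + δ‖) : δ = 1 := by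
  have hray : SameRay ℝ 1 δ :=
    sameRay_iff_norm_add.2 (le_antisymm (norm_add_le _ _) (by rw [norm_one, hδ]; linarith))
  exact (hray.eq_of_norm_eq (by rw [norm_one, hδ])).symm

section Holomorphic

variable {X Y : Type*} [NormedAddCommGroup X] [NormedSpace ℂ X]
  [NormedAddCommGroup Y] [NormedSpace ℂ Y] {f g : X → Y}

theorem MemAb.add (hf : MemAb f) (hg : MemAb g) : MemAb (f + g) := by
  obtain ⟨hfc, ⟨C, hC⟩, hfd⟩ := hf
  obtain ⟨hgc, ⟨D, hD⟩, hgd⟩ := hg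
  exact ⟨hfc.add hgc, ⟨C + D, fun x hx => (norm_add_le _ _).trans (add_le_add (hC x hx) (hD x hx))⟩,
    hfd.add hgd⟩

theorem MemAu.add (hf : MemAu f) (hg : MemAu g) : MemAu (f + g) :=
  ⟨hf.1.add hg.1, uniformContinuousOn_iff_restrict.2
    ((uniformContinuousOn_iff_restrict.1 hf.2).add (uniformContinuousOn_iff_restrict.1 hg.2))⟩

theorem MemAb.comp_smul (hf : MemAb f) {α : ℂ} (hα : ‖α‖ = 1) : MemAb (fun x => f (α • x)) := by
  obtain ⟨hfc, ⟨C, hC⟩, hfd⟩ := hf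
  refine ⟨hfc.comp (continuous_const_smul α).continuousOn
      (fun x hx => (smul_mem_closedBall_iff hα).2 hx),
    ⟨C, fun x hx => hC _ ((smul_mem_closedBall_iff hα).2 hx)⟩,
    hfd.comp (differentiable_id.const_smul α).differentiableOn fun x hx => ?_⟩
  simpa [norm_smul, hα] using hx

theorem MemAu.comp_smul (hf : MemAu f) {α : ℂ} (hα : ‖α‖ = 1) : MemAu (fun x => f (α • x)) :=
  ⟨hf.1.comp_smul hα, hf.2.comp (uniformContinuous_const_smul α).uniformContinuousOn
    fun _ hx => (smul_mem_closedBall_iff hα).2 hx⟩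

theorem memAu_clm_add_const (L : X →L[ℂ] Y) (c : Y) : MemAu (fun x => L x + c) := by
  refine ⟨⟨by fun_prop, ⟨‖L‖ + ‖c‖, fun x hx => ?_⟩, by fun_prop⟩,
    (L.uniformContinuous.add uniformContinuous_const).uniformContinuousOn⟩
  have hx : ‖x‖ ≤ 1 := by simpa using hx
  calc ‖L x + c‖ ≤ ‖L‖ * ‖x‖ + ‖c‖ := (norm_add_le _ _).trans (add_le_add_left (L.le_opNorm x) _)
    _ ≤ ‖L‖ + ‖c‖ := by gcongr; exact mul_le_of_le_one_right (norm_nonneg L) hx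

theorem memAb_of_mem {A : Set (X → Y)} (hA : A = {f | MemAb f} ∨ A = {f | MemAu f})
    (hf : f ∈ A) : MemAb f := by
  rcases hA with rfl | rfl
  exacts [hf, hf.1]

theorem add_mem_of_memAu {A : Set (X → Y)} (hA : A = {f | MemAb f} ∨ A = {f | MemAu f})
    (hf : f ∈ A) (hg : MemAu g) : f + g ∈ A := by
  rcases hA with rfl | rfl
  exacts [MemAb.add hf hg.1, MemAu.add hf hg]

theorem comp_smul_mem {A : Set (X → Y)} (hA : A = {f | MemAb f} ∨ A = {f | MemAu f})
    (hf : f ∈ A) {α : ℂ} (hα : ‖α‖ = 1) : (fun x => f (α • x)) ∈ A := by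
  rcases hA with rfl | rfl
  exacts [MemAb.comp_smul hf hα, MemAu.comp_smul hf hα]

theorem MemAb.norm_apply_zero_eq_supNorm (hf : MemAb f) {z : X} (hz : z ∈ ball (0 : X) 1)
    (hfz : ‖f z‖ = supNorm f) : ‖f 0‖ = supNorm f := by
  have hmax : IsMaxOn (norm ∘ f) (ball (0 : X) 1) z := fun w hw =>
    (norm_le_supNorm hf.2.1 (ball_subset_closedBall hw)).trans_eq hfz.symm
  rw [← hfz]
  exact Complex.norm_eqOn_of_isPreconnected_of_isMaxOn (convex_ball 0 1).isPreconnected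
    isOpen_ball hf.2.2 hz hmax (mem_ball_self one_pos)

theorem StronglyAttains.eq_zero_of_norm_lt_one {x₀ : X} (hatt : StronglyAttains ℂ f x₀)
    (hf : MemAb f) (hx₀ : ‖x₀‖ < 1) : x₀ = 0 := by
  obtain ⟨α, hα, -, hfα⟩ := hatt.exists_norm_eq_supNorm hf.1 hf.2.1
  have hf0 := hf.norm_apply_zero_eq_supNorm (by simpa [norm_smul, hα] using hx₀) hfα
  obtain ⟨γ, hγ, h0⟩ := hatt.exists_smul_eq_of_norm_eq_supNorm (mem_closedBall_self zero_le_one) hf0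
  exact (smul_eq_zero.1 h0.symm).resolve_left (by rintro rfl; simp at hγ)

theorem StronglyAttains.exists_memAu_strongPeakAt_add {x₀ : X} (hatt : StronglyAttains ℂ f x₀)
    (hcont : ContinuousOn f (closedBall (0 : X) 1))
    (hbdd : ∃ C, ∀ x ∈ closedBall (0 : X) 1, ‖f x‖ ≤ C)
    (hx₀ : ‖x₀‖ = 1) (hfx₀ : ‖f x₀‖ = supNorm f) (hpos : 0 < supNorm f) :
    ∃ g : X → Y, MemAu g ∧ StrongPeakAt (f + g) x₀ := by
  set M := supNorm f
  have hx₀B : x₀ ∈ closedBall (0 : X) 1 := by simp [hx₀]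
  obtain ⟨xstar, hxstar, hxstar₀⟩ := exists_dual_vector ℂ x₀ (norm_ne_zero_iff.1 (by simp [hx₀]))
  set y₀ : Y := M⁻¹ • f x₀
  have hy₀ : ‖y₀‖ = 1 := by simp [y₀, norm_smul, hfx₀, abs_of_pos hpos, hpos.ne']
  have hfy₀ : f x₀ = M • y₀ := by simp [y₀, smul_smul, hpos.ne']
  set g : X → Y := fun x => ((2⁻¹ : ℂ) • xstar).smulRight y₀ x + (2⁻¹ : ℂ) • y₀
  have hg : MemAu g := memAu_clm_add_const _ _
  have hg_apply : ∀ x, g x = (2⁻¹ * (1 + xstar x)) • y₀ := by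
    intro x
    simp only [g, ContinuousLinearMap.smulRight_apply, smul_apply, smul_eq_mul]
    rw [← add_smul]
    ring_nf
  have hg_le : ∀ x ∈ closedBall (0 : X) 1, ‖g x‖ ≤ 1 := by
    intro x hx
    have hxstar_x : ‖xstar x‖ ≤ 1 :=
      (xstar.le_opNorm x).trans (by simpa [hxstar] using hx)
    rw [hg_apply, norm_smul, hy₀, mul_one, norm_mul, norm_inv, Complex.norm_ofNat]
    linarith [norm_add_le (1 : ℂ) (xstar x), norm_one (α := ℂ)]
  have hsum_x₀ : ‖(f + g) x₀‖ = M + 1 := by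
    have hg_x₀ : g x₀ = y₀ := by rw [hg_apply, hxstar₀, hx₀]; norm_num
    have hsum : f x₀ + g x₀ = (M + 1) • y₀ := by rw [hg_x₀, hfy₀, add_smul, one_smul]
    rw [Pi.add_apply, hsum, norm_smul, hy₀, mul_one, Real.norm_of_nonneg (by linarith)]
  have hsup : supNorm (f + g) = M + 1 :=
    supNorm_eq_of_forall_norm_le (fun x hx => (norm_add_le _ _).trans
      (add_le_add (norm_le_supNorm hbdd hx) (hg_le x hx))) hx₀B hsum_x₀
  refine ⟨g, hg, (hatt.add hbdd hg_le hsup).strongPeakAt (hcont.add hg.1.1)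
    ⟨x₀, hx₀B, fun h => by simp [h] at hsum_x₀; linarith⟩ fun δ hδ hδmax => ?_⟩
  have hδB : δ • x₀ ∈ closedBall (0 : X) 1 := by simp [norm_smul, hδ, hx₀]
  have hgδ : ‖g (δ • x₀)‖ = 2⁻¹ * ‖1 + δ‖ := by
    simp [hg_apply, hxstar₀, hx₀, norm_smul, hy₀]
  have : M + 1 ≤ M + 2⁻¹ * ‖1 + δ‖ :=
    calc M + 1 = ‖(f + g) (δ • x₀)‖ := by rw [hδmax, hsup]
      _ ≤ ‖f (δ • x₀)‖ + ‖g (δ • x₀)‖ := norm_add_le _ _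
      _ ≤ M + 2⁻¹ * ‖1 + δ‖ := by rw [hgδ]; gcongr; exact norm_le_supNorm hbdd hδB
  rw [Complex.eq_one_of_norm_one_add hδ (by linarith), one_smul]

theorem norm_add_smul_le_one_of_forall_exp {x y : X} (hx : ‖x‖ ≤ 1)
    (hy : ∀ θ : ℝ, ‖x + Complex.exp (θ * Complex.I) • y‖ ≤ 1) {c : ℂ} (hc : ‖c‖ ≤ 1) :
    ‖x + c • y‖ ≤ 1 := by
  have hdecomp : x + c • y =
      (1 - ‖c‖) • x + ‖c‖ • (x + Complex.exp (c.arg * Complex.I) • y) := by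
    rw [smul_add, ← add_assoc, ← add_smul, sub_add_cancel, one_smul, ← Complex.coe_smul,
      smul_smul, Complex.norm_mul_exp_arg_mul_I]
  have hconv := convex_closedBall (0 : X) 1 (mem_closedBall_zero_iff.2 hx)
    (mem_closedBall_zero_iff.2 (hy c.arg)) (sub_nonneg.2 hc) (norm_nonneg c) (sub_add_cancel 1 _)
  rwa [← hdecomp, mem_closedBall_zero_iff] at hconv

theorem exists_norm_le_norm_add_smul {U : Set X} (hf : DifferentiableOn ℂ f U) {a b : X}
    (hab : ∀ c : ℂ, ‖c‖ ≤ 1 → a + c • b ∈ U) : ∃ c : ℂ, ‖c‖ = 1 ∧ ‖f a‖ ≤ ‖f (a + c • b)‖ := by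
  have hd : DiffContOnCl ℂ (fun c : ℂ => f (a + c • b)) (ball 0 1) := by
    refine DifferentiableOn.diffContOnCl ?_
    rw [closure_ball 0 one_ne_zero]
    exact hf.comp (by fun_prop) fun c hc => hab c (by simpa using hc)
  obtain ⟨c, hc, hmax⟩ :=
    Complex.exists_mem_frontier_isMaxOn_norm isBounded_ball ⟨0, mem_ball_self one_pos⟩ hd
  rw [frontier_ball 0 one_ne_zero] at hc
  exact ⟨c, by simpa using hc, by simpa using hmax (subset_closure (mem_ball_self one_pos))⟩

theorem MemAb.exists_norm_add_smul_eq_supNorm (hf : MemAb f) {x₀ y : X}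
    (hfx₀ : ‖f x₀‖ = supNorm f)
    (hdisc : ∀ c : ℂ, ‖c‖ ≤ 1 → x₀ + c • y ∈ closedBall (0 : X) 1) :
    ∃ c : ℂ, ‖c‖ = 1 ∧ ‖f (x₀ + c • y)‖ = supNorm f := by
  obtain ⟨hcont, hbdd, hdiff⟩ := hf
  set r : ℕ → ℝ := fun n => n / (n + 1)
  have hr : ∀ n, 0 ≤ r n ∧ r n < 1 := fun n =>
    ⟨by positivity, by rw [div_lt_one (by positivity)]; linarith⟩
  -- Shrinking the disc by `r n < 1` puts it inside the open ball, where `f` is holomorphic.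
  have hmem : ∀ n (c : ℂ), ‖c‖ ≤ 1 → r n • x₀ + c • r n • y ∈ ball (0 : X) 1 := by
    intro n c hc
    rw [smul_comm, ← smul_add, mem_ball_zero_iff, norm_smul, Real.norm_of_nonneg (hr n).1]
    exact (mul_le_of_le_one_right (hr n).1 (mem_closedBall_zero_iff.1 (hdisc c hc))).trans_lt
      (hr n).2
  choose c hc hle using fun n => exists_norm_le_norm_add_smul hdiff (hmem n)
  obtain ⟨c₀, hc₀, σ, hσ, hlim⟩ :=
    (isCompact_sphere (0 : ℂ) 1).tendsto_subseq (x := c) (by simpa using hc)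
  have hc₀ : ‖c₀‖ = 1 := by simpa using hc₀
  have hrσ : Tendsto (fun k => r (σ k)) atTop (𝓝 1) :=
    (tendsto_natCast_div_add_atTop (1 : ℝ)).comp hσ.tendsto_atTop
  have hx₀ : x₀ ∈ closedBall (0 : X) 1 := by simpa using hdisc 0 (by simp)
  have hlim_center : Tendsto (fun k => ‖f (r (σ k) • x₀)‖) atTop (𝓝 (supNorm f)) := by
    refine hfx₀ ▸ (hcont.tendsto_comp_of_mem hx₀ (fun k => ?_) ?_).norm
    · simpa using ball_subset_closedBall (hmem (σ k) 0 (by simp))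
    · simpa using hrσ.smul_const x₀
  have hlim_circle : Tendsto (fun k => ‖f (r (σ k) • x₀ + c (σ k) • r (σ k) • y)‖) atTop
      (𝓝 ‖f (x₀ + c₀ • y)‖) := by
    refine (hcont.tendsto_comp_of_mem (hdisc c₀ hc₀.le)
      (fun k => ball_subset_closedBall (hmem (σ k) _ (hc (σ k)).le)) ?_).norm
    simpa using (hrσ.smul_const x₀).add (hlim.smul (hrσ.smul_const y))
  refine ⟨c₀, hc₀, le_antisymm (norm_le_supNorm hbdd (hdisc c₀ hc₀.le)) ?_⟩
  exact le_of_tendsto_of_tendsto' hlim_center hlim_circle fun k => hle (σ k)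

theorem StrongPeakAt.complexExtremePoint {x₀ : X} (hp : StrongPeakAt f x₀) (hf : MemAb f) :
    ComplexExtremePoint x₀ := by
  obtain ⟨hx₀, hfx₀⟩ := hp.norm_eq_supNorm hf.1 hf.2.1
  refine ⟨hx₀, fun y hy => ?_⟩
  have hdisc : ∀ c : ℂ, ‖c‖ ≤ 1 → x₀ + c • y ∈ closedBall (0 : X) 1 := fun c hc =>
    mem_closedBall_zero_iff.2
      (norm_add_smul_le_one_of_forall_exp (mem_closedBall_zero_iff.1 hx₀) hy hc)
  obtain ⟨c, hc, hfc⟩ := hf.exists_norm_add_smul_eq_supNorm hfx₀ hdisc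
  have hcy : c • y = 0 := by simpa using hp.eq_of_norm_eq_supNorm (hdisc c hc.le) hfc
  exact (smul_eq_zero.1 hcy).resolve_left (by rintro rfl; simp at hc)

end Holomorphic

theorem statement14_general {X Y : Type*} [NormedAddCommGroup X] [NormedSpace ℂ X]
    [NormedAddCommGroup Y] [NormedSpace ℂ Y]
    (H A : Set (X → Y))
    (hA : A = {f | MemAb f} ∨ A = {f | MemAu f}) (hH : H ⊆ A) :
    {x₀ | ∃ f ∈ H, (∃ x ∈ Metric.closedBall (0 : X) 1, f x ≠ 0) ∧ StronglyAttains ℂ f x₀}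
        ⊆ {x₀ | ∃ f ∈ A, StrongPeakAt f x₀} ∧
      {x₀ | ∃ f ∈ A, StrongPeakAt f x₀} ⊆ {x | ComplexExtremePoint x} := by
  refine ⟨?_, fun x₀ ⟨f, hfA, hpeak⟩ => hpeak.complexExtremePoint (memAb_of_mem hA hfA)⟩
  rintro x₀ ⟨f, hfH, hne, hatt⟩
  have hfA := hH hfH
  have hf := memAb_of_mem hA hfA
  obtain ⟨α, hα, hαx₀, hfα⟩ := hatt.exists_norm_eq_supNorm hf.1 hf.2.1
  rcases (show ‖x₀‖ ≤ 1 by simpa [norm_smul, hα] using hαx₀).lt_or_eq with hlt | hx₀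
  · obtain rfl := hatt.eq_zero_of_norm_lt_one hf hlt
    exact ⟨f, hfA, hatt.strongPeakAt hf.1 hne fun δ _ _ => smul_zero δ⟩
  · obtain ⟨x, hx, hfx⟩ := hne
    have hpos : 0 < supNorm f := (norm_pos_iff.2 hfx).trans_le (norm_le_supNorm hf.2.1 hx)
    have hrot := hf.comp_smul hα
    obtain ⟨g, hg, hpeak⟩ := (hatt.comp_smul hα).exists_memAu_strongPeakAt_add hrot.1 hrot.2.1
      hx₀ (by rwa [supNorm_comp_smul hα]) (by rwa [supNorm_comp_smul hα])
    exact ⟨_, add_mem_of_memAu hA (comp_smul_mem hA hfA hα) hg, hpeak⟩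

/-- for a subspace `H` of `A(B_X : Y)` (where `A` is `A_b` or `A_u`),
`ρ̃H ⊆ ρA(B_X : Y) ⊆ ext_ℂ(B_X)`. -/
theorem statement14 {X Y : Type*} [NormedAddCommGroup X] [NormedSpace ℂ X] [CompleteSpace X]
    [NormedAddCommGroup Y] [NormedSpace ℂ Y] [CompleteSpace Y]
    (H A : Set (X → Y))
    (hA : A = {f | MemAb f} ∨ A = {f | MemAu f}) (hH : H ⊆ A) :
    {x₀ | ∃ f ∈ H, (∃ x ∈ Metric.closedBall (0 : X) 1, f x ≠ 0) ∧ StronglyAttains ℂ f x₀}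
        ⊆ {x₀ | ∃ f ∈ A, StrongPeakAt f x₀} ∧
      {x₀ | ∃ f ∈ A, StrongPeakAt f x₀} ⊆ {x | ComplexExtremePoint x} :=
  statement14_general H A hA hH
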